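/- Let G be a finite graph with vertex set A partitioned into S and B, let u ∈ ℝ^A with Σ_{i∈A} dᵢuᵢ = 0, and let z ∈ ℝ^B be defined by zᵢ = uᵢ − ū_B where ū_B = (1/vol(B))Σ_{i∈B} dᵢuᵢ. If λ < vol(B)/vol(A) and Σ_{i∈S} dᵢuᵢ² ≤ λ·Σ_{i∈A} dᵢuᵢ², then Σ_{i∈B} dᵢzᵢ² ≥ ((vol(B) − λ·vol(A))/vol(B))·Σ_{i∈A} dᵢuᵢ². -/
import Mathlib


theorem unbalanced_cut_denominator_bound {V : Type*} [Fintype V] [DecidableEq V]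
    (d : V → ℝ) (hd : ∀ v, 0 < d v)
    (A S B : Finset V) (hS : S.Nonempty) (hB : B.Nonempty)
    (hdisj : Disjoint S B) (hunion : S ∪ B = A)
    (u : V → ℝ) (hu : ∑ i ∈ A, d i * u i = 0)
    (lam : ℝ) (hlam : lam < (∑ i ∈ B, d i) / ∑ i ∈ A, d i)
    (hSu : ∑ i ∈ S, d i * u i ^ 2 ≤ lam * ∑ i ∈ A, d i * u i ^ 2) :
    ∑ i ∈ B, d i * (u i - (1 / ∑ i ∈ B, d i) * ∑ i ∈ B, d i * u i) ^ 2
      ≥ ((∑ i ∈ B, d i - lam * ∑ i ∈ A, d i) / ∑ i ∈ B, d i)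
        * ∑ i ∈ A, d i * u i ^ 2 := by
  have hvB : (0:ℝ) < ∑ i ∈ B, d i := Finset.sum_pos (fun i _ => hd i) hB
  have hvS : (0:ℝ) < ∑ i ∈ S, d i := Finset.sum_pos (fun i _ => hd i) hS
  have hsplit : ∀ f : V → ℝ, ∑ i ∈ A, f i = ∑ i ∈ S, f i + ∑ i ∈ B, f i := by
    intro f; rw [← hunion, Finset.sum_union hdisj]
  have hsum : ∑ i ∈ S, d i * u i + ∑ i ∈ B, d i * u i = 0 := by
    rw [← hsplit]; exact hu
  have hvA : ∑ i ∈ A, d i = ∑ i ∈ S, d i + ∑ i ∈ B, d i := hsplit _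
  have hT : ∑ i ∈ A, d i * u i ^ 2
      = ∑ i ∈ S, d i * u i ^ 2 + ∑ i ∈ B, d i * u i ^ 2 := hsplit _
  -- Cauchy–Schwarz on S
  have hCS : (∑ i ∈ S, d i * u i) ^ 2
      ≤ (∑ i ∈ S, d i) * ∑ i ∈ S, d i * u i ^ 2 := by
    have h := Finset.sum_mul_sq_le_sq_mul_sq S
      (fun i => Real.sqrt (d i)) (fun i => Real.sqrt (d i) * u i)
    have h1 : ∀ i ∈ S, Real.sqrt (d i) * (Real.sqrt (d i) * u i) = d i * u i := by
      intro i _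
      rw [← mul_assoc, Real.mul_self_sqrt (hd i).le]
    have h2 : ∀ i ∈ S, Real.sqrt (d i) ^ 2 = d i := fun i _ =>
      Real.sq_sqrt (hd i).le
    have h3 : ∀ i ∈ S, (Real.sqrt (d i) * u i) ^ 2 = d i * u i ^ 2 := by
      intro i _
      rw [mul_pow, Real.sq_sqrt (hd i).le]
    rw [Finset.sum_congr rfl h1, Finset.sum_congr rfl h2, Finset.sum_congr rfl h3] at h
    exact h
  set m : ℝ := (1 / ∑ i ∈ B, d i) * ∑ i ∈ B, d i * u i with hm
  have hexp : ∑ i ∈ B, d i * (u i - m) ^ 2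
      = ∑ i ∈ B, d i * u i ^ 2 - (∑ i ∈ B, d i * u i) ^ 2 / (∑ i ∈ B, d i) := by
    have : ∀ i ∈ B, d i * (u i - m) ^ 2
        = d i * u i ^ 2 - 2 * m * (d i * u i) + m ^ 2 * d i := by
      intro i _; ring
    rw [Finset.sum_congr rfl this, Finset.sum_add_distrib, Finset.sum_sub_distrib,
      ← Finset.mul_sum, ← Finset.mul_sum, hm]
    field_simp
    ring
  rw [hexp, ge_iff_le, div_mul_eq_mul_div, div_le_iff₀ hvB]
  have hsB : (∑ i ∈ B, d i * u i) ^ 2 = (∑ i ∈ S, d i * u i) ^ 2 := by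
    have : ∑ i ∈ B, d i * u i = -∑ i ∈ S, d i * u i := by linarith
    rw [this]; ring
  have h4 : (∑ i ∈ S, d i) * (∑ i ∈ S, d i * u i ^ 2)
      ≤ (∑ i ∈ S, d i) * (lam * ∑ i ∈ A, d i * u i ^ 2) :=
    mul_le_mul_of_nonneg_left hSu hvS.le
  have h5 : (∑ i ∈ B, d i) * (∑ i ∈ S, d i * u i ^ 2)
      ≤ (∑ i ∈ B, d i) * (lam * ∑ i ∈ A, d i * u i ^ 2) :=
    mul_le_mul_of_nonneg_left hSu hvB.le
  have hdiv : (∑ i ∈ B, d i * u i) ^ 2 / (∑ i ∈ B, d i) * ∑ i ∈ B, d i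
      = (∑ i ∈ B, d i * u i) ^ 2 := div_mul_cancel₀ _ hvB.ne'
  have h6 : (∑ i ∈ B, d i) * ∑ i ∈ A, d i * u i ^ 2
      = (∑ i ∈ B, d i) * ∑ i ∈ S, d i * u i ^ 2
        + (∑ i ∈ B, d i) * ∑ i ∈ B, d i * u i ^ 2 := by rw [hT]; ring
  nlinarith [hCS, hsB, hdiv, h6, h4, h5, hvA]
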